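/- arXiv:2510.06197 — 3 statements merged into one kernel-verified Lean document; each statement's English description precedes it below -/
import Mathlib

section
/- Let $A$ be a DVR with fraction field $F$ and uniformizer $\pi$, and let $\mathcal{R}, \mathcal{R}'$ be two finite free $A$-submodules of a fixed $F$-vector space with $\mathcal{R} \otimes_A F = \mathcal{R}' \otimes_A F$. Define filtrations $\mathcal{G}^\lambda \mathcal{R} := \mathcal{R} \cap \pi^{\lceil \lambda \rceil} \mathcal{R}'$ and $\mathcal{G}'^\lambda \mathcal{R}' := \mathcal{R}' \cap \pi^{\lceil \lambda \rceil} \mathcal{R}$, and let $G, G'$ be the induced filtrations on $R := \mathcal{R}/\pi\mathcal{R}$ and $R' := \mathcal{R}'/\pi\mathcal{R}'$. Then for every integer $\lambda$, multiplication by $\pi^{-\lambda}$ induces an isomorphism of graded pieces $\mathrm{gr}_G^\lambda R \cong \mathrm{gr}_{G'}^{-\lambda} R'$. -/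
/-!
Multiplication by `π^{-l}` is an automorphism of the lattice of `A`-submodules of `V`, commuting
with `⊓` and `⊔`. It sends `𝒢^l ℛ = ℛ ∩ π^l ℛ'` onto `π^{-l} ℛ ∩ ℛ' = 𝒢'^{-l} ℛ'`, and, because
`πℛ ⊆ ℛ` and `πℛ' ⊆ ℛ'`, it sends `𝒢^{l+1} ℛ` onto `𝒢'^{-l} ℛ' ∩ πℛ'` and `𝒢^l ℛ ∩ πℛ` onto
`𝒢'^{-l+1} ℛ'`. So it carries the numerator and the denominator of `gr_G^l R` onto those of
`gr_{G'}^{-l} R'`, the two summands of the denominator trading places.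
-/

open Function

namespace Submodule

variable {A M N : Type*} [CommRing A] [AddCommGroup M] [Module A M] [AddCommGroup N] [Module A N]

noncomputable def quotientComapSubtypeEquivOfMapEq {f : M →ₗ[A] N} (hf : Injective f)
    {P X : Submodule A M} {P' X' : Submodule A N} (hP : P.map f = P') (hX : X.map f = X') :
    (P ⧸ X.comap P.subtype) ≃ₗ[A] (P' ⧸ X'.comap P'.subtype) := by
  subst hP hX
  refine Quotient.equiv _ _ (P.equivMapOfInjective f hf) ?_
  ext ⟨_, z, hzP, rfl⟩
  have hsymm : (P.equivMapOfInjective f hf).symm ⟨f z, z, hzP, rfl⟩ = ⟨z, hzP⟩ :=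
    (LinearEquiv.symm_apply_eq _).2 rfl
  simp [hsymm, hf.eq_iff]

end Submodule

section Homothety

variable (A : Type*) {K V : Type*} [CommRing A] [Field K] [Algebra A K]
  [AddCommGroup V] [Module K V] [Module A V] [IsScalarTower A K V]

def homothety (c : K) : V →ₗ[A] V := (c • LinearMap.id : V →ₗ[K] V).restrictScalars A

variable {A}

@[simp]
theorem homothety_apply (c : K) (x : V) : homothety A c x = c • x := rfl

theorem homothety_injective {c : K} (hc : c ≠ 0) : Injective (homothety A c : V →ₗ[A] V) :=
  smul_right_injective V hc

theorem map_homothety_map_homothety (c d : K) (S : Submodule A V) :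
    (S.map (homothety A c)).map (homothety A d) = S.map (homothety A (d * c)) := by
  rw [← Submodule.map_comp]
  congr 1
  ext x
  simp [mul_smul]

@[simp]
theorem map_homothety_one (S : Submodule A V) : S.map (homothety A (1 : K)) = S := by
  ext; simp

theorem map_homothety_algebraMap_le (a : A) (S : Submodule A V) :
    S.map (homothety A (algebraMap A K a)) ≤ S := by
  rintro _ ⟨x, hx, rfl⟩
  simpa [algebraMap_smul] using S.smul_mem a hx

theorem map_homothety_zpow_map_homothety_zpow {u : K} (hu : u ≠ 0) (i j : ℤ)
    (S : Submodule A V) :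
    (S.map (homothety A (u ^ i))).map (homothety A (u ^ j)) =
      S.map (homothety A (u ^ (j + i))) := by
  rw [map_homothety_map_homothety, zpow_add₀ hu]

end Homothety

section DualFiltration

variable {A K V : Type*} [CommRing A] [Field K] [Algebra A K]
  [AddCommGroup V] [Module K V] [Module A V] [IsScalarTower A K V]

/-- The paper's `𝒢^j ℛ`; `dualFiltration R R u 1 = ℛ ∩ uℛ` plays the role of `πℛ`. -/
def dualFiltration (R R' : Submodule A V) (u : K) (j : ℤ) : Submodule A V :=
  R ⊓ R'.map (homothety A (u ^ j))

variable (R R' : Submodule A V) {u : K} (hu : u ≠ 0) (l : ℤ)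
include hu

theorem map_homothety_dualFiltration :
    (dualFiltration R R' u l).map (homothety A (u ^ (-l))) = dualFiltration R' R u (-l) := by
  rw [dualFiltration, dualFiltration, Submodule.map_inf _ (homothety_injective (zpow_ne_zero _ hu)),
    map_homothety_zpow_map_homothety_zpow hu, neg_add_cancel, zpow_zero, map_homothety_one,
    inf_comm]

theorem map_homothety_dualFiltration_add_one (hR' : R'.map (homothety A u) ≤ R') :
    (dualFiltration R R' u (l + 1)).map (homothety A (u ^ (-l))) =
      dualFiltration R' R u (-l) ⊓ dualFiltration R' R' u 1 := by
  rw [← zpow_one u] at hR'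
  rw [dualFiltration, dualFiltration, dualFiltration,
    Submodule.map_inf _ (homothety_injective (zpow_ne_zero _ hu)),
    map_homothety_zpow_map_homothety_zpow hu, neg_add_cancel_left, inf_eq_right.2 hR',
    inf_assoc, inf_eq_right.2 (inf_le_right.trans hR')]

theorem map_homothety_dualFiltration_inf (hR : R.map (homothety A u) ≤ R) :
    (dualFiltration R R' u l ⊓ dualFiltration R R u 1).map (homothety A (u ^ (-l))) =
      dualFiltration R' R u (-l + 1) := by
  have hle : R.map (homothety A (u ^ (-l + 1))) ≤ R.map (homothety A (u ^ (-l))) := by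
    rw [← map_homothety_zpow_map_homothety_zpow hu]
    exact Submodule.map_mono (by rwa [zpow_one])
  simp only [dualFiltration, Submodule.map_inf _ (homothety_injective (zpow_ne_zero _ hu)),
    map_homothety_zpow_map_homothety_zpow hu, neg_add_cancel, zpow_zero, map_homothety_one,
    inf_eq_right.2 hle]
  rw [inf_comm _ R', inf_assoc, inf_eq_right.2 hle]

end DualFiltration

theorem stmt8_general {A K V : Type*} [CommRing A]
    [Field K] [Algebra A K] [IsFractionRing A K]
    [AddCommGroup V] [Module K V] [Module A V] [IsScalarTower A K V]
    (π : A) (hπ : Irreducible π)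
    (R R' : Submodule A V)
    (l : ℤ) :
    letI u : K := algebraMap A K π
    -- multiplication by `π^j` on `V`, as an `A`-linear map
    letI mulπ : ℤ → (V →ₗ[A] V) := fun j =>
      ((u ^ j) • (LinearMap.id : V →ₗ[K] V)).restrictScalars A
    letI sG : ℤ → Submodule A V := fun j => R ⊓ (R'.map (mulπ j))
    letI sG' : ℤ → Submodule A V := fun j => R' ⊓ (R.map (mulπ j))
    letI πR : Submodule A V := R ⊓ (R.map (mulπ 1))
    letI πR' : Submodule A V := R' ⊓ (R'.map (mulπ 1))
    Nonempty (
      ((sG l) ⧸ ((sG (l + 1) ⊔ (sG l ⊓ πR)).comap (sG l).subtype))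
        ≃ₗ[A]
      ((sG' (-l)) ⧸ ((sG' (-l + 1) ⊔ (sG' (-l) ⊓ πR')).comap (sG' (-l)).subtype))) := by
  have hu : algebraMap A K π ≠ 0 :=
    (map_ne_zero_iff _ (IsFractionRing.injective A K)).2 hπ.ne_zero
  have hsup := (Submodule.map_sup _ _ _).trans <| (congrArg₂ (· ⊔ ·)
    (map_homothety_dualFiltration_add_one R R' hu l (map_homothety_algebraMap_le π R'))
    (map_homothety_dualFiltration_inf R R' hu l (map_homothety_algebraMap_le π R))).trans
      (sup_comm _ _)
  exact ⟨Submodule.quotientComapSubtypeEquivOfMapEq (homothety_injective (zpow_ne_zero (-l) hu))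
    (map_homothety_dualFiltration R R' hu l) hsup⟩

theorem stmt8 {A K V : Type*} [CommRing A] [IsDomain A] [IsDiscreteValuationRing A]
    [Field K] [Algebra A K] [IsFractionRing A K]
    [AddCommGroup V] [Module K V] [Module A V] [IsScalarTower A K V]
    (π : A) (hπ : Irreducible π)
    (R R' : Submodule A V)
    [Module.Free A R] [Module.Finite A R] [Module.Free A R'] [Module.Finite A R']
    (hspan : Submodule.span K (R : Set V) = Submodule.span K (R' : Set V))
    (l : ℤ) :
    letI u : K := algebraMap A K π
    -- multiplication by `π^j` on `V`, as an `A`-linear map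
    letI mulπ : ℤ → (V →ₗ[A] V) := fun j =>
      ((u ^ j) • (LinearMap.id : V →ₗ[K] V)).restrictScalars A
    letI sG : ℤ → Submodule A V := fun j => R ⊓ (R'.map (mulπ j))
    letI sG' : ℤ → Submodule A V := fun j => R' ⊓ (R.map (mulπ j))
    letI πR : Submodule A V := R ⊓ (R.map (mulπ 1))
    letI πR' : Submodule A V := R' ⊓ (R'.map (mulπ 1))
    Nonempty (
      ((sG l) ⧸ ((sG (l + 1) ⊔ (sG l ⊓ πR)).comap (sG l).subtype))
        ≃ₗ[A]
      ((sG' (-l)) ⧸ ((sG' (-l + 1) ⊔ (sG' (-l) ⊓ πR')).comap (sG' (-l)).subtype))) :=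
  stmt8_general π hπ R R' l
end

section
/- Let $\mathcal{F}$ be a linearly bounded filtration of the section ring $R$ of an ample line bundle on a projective reduced scheme $X = X_1 \cup \cdots \cup X_s$ over an algebraically closed field, and let $\mathcal{F}_i$ be the induced filtrations on the graded linear series $V_\bullet^i$ on the components. Then for each $m$: $S_m(\mathcal{F}) = \sum_{i=1}^s \frac{\dim V_m^i}{\dim R_m} S_m(\mathcal{F}_i)$ and $T_m(\mathcal{F}) = \max_{1 \le i \le s} T_m(\mathcal{F}_i)$. -/
/-!
STATEMENT 11 (Lemma 2.9): for a linearly bounded filtration `F` of the section ring of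
an ample line bundle on a reduced projective scheme `X = X₁ ∪ ⋯ ∪ X_s`, with induced
filtrations `Fᵢ` on the graded linear series `Vᵢ` on the components,
`S_m(F) = ∑ᵢ (dim Vᵢ / dim R_m) S_m(Fᵢ)` and `T_m(F) = maxᵢ T_m(Fᵢ)`.

Formalized via the linear-algebra content of the proof: `H = R_m`, restriction maps
`rᵢ : H → H⁰(Xᵢ, mL|_{Xᵢ})`, the chain `Wᵢ` with `W_{i+1} = Wᵢ ∩ ker rᵢ`, `Vᵢ = rᵢ(Wᵢ)`
and `Fᵢ^t := rᵢ(F^t ∩ Wᵢ)`.  `S_m` is expressed through jumping numbers and `T_m`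
through the last jump.
-/

open Module

/-- `S_m`-invariant of a filtration `F` of a subspace `W` (the ambient graded piece),
via jumping numbers. -/
noncomputable def SmRel {k V : Type*} [Field k] [AddCommGroup V] [Module k V]
    (W : Submodule k V) (F : ℝ → Submodule k V) (m : ℕ) : ℝ :=
  ((m : ℝ) * (Module.finrank k W : ℝ))⁻¹ *
    ∑ j ∈ Finset.range (Module.finrank k W),
      sInf {t : ℝ | j + 1 ≤ Module.finrank k W - Module.finrank k (F t)}

/-- `T_m`-invariant of a filtration. -/
noncomputable def TmRel {k V : Type*} [Field k] [AddCommGroup V] [Module k V]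
    (F : ℝ → Submodule k V) (m : ℕ) : ℝ :=
  (m : ℝ)⁻¹ * sSup {t : ℝ | F t ≠ ⊥}


/-! ### Auxiliary multiset counting lemmas -/

lemma countP_le_split (x : ℝ) (A : Multiset ℝ) :
    A.countP (fun a => x ≤ a) = A.countP (fun a => x < a) + A.count x := by
  classical
  induction A using Multiset.induction_on with
  | empty => simp
  | cons a s ih =>
    rcases lt_trichotomy x a with h | h | h
    · simp [Multiset.countP_cons, Multiset.count_cons, h, le_of_lt h, h.ne, ih]; omega
    · subst h
      simp [Multiset.countP_cons, Multiset.count_cons, lt_irrefl, ih]; omega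
    · simp [Multiset.countP_cons, Multiset.count_cons, not_le_of_gt h, h.ne',
        not_lt_of_gt h, ih]

lemma multiset_eq_of_countP (A B : Multiset ℝ)
    (h : ∀ t : ℝ, A.countP (fun a => t ≤ a) = B.countP (fun a => t ≤ a)) :
    A = B := by
  classical
  ext x
  obtain ⟨y, hxy, hy⟩ : ∃ y, x < y ∧ ∀ e ∈ (A + B), x < e → y ≤ e := by
    set E := ((A + B).toFinset.filter (fun e => x < e)) with hE
    rcases E.eq_empty_or_nonempty with hne | hne
    · exact ⟨x + 1, by linarith, fun e he hxe => absurd (Finset.eq_empty_iff_forall_notMem.mp hne e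
        (Finset.mem_filter.mpr ⟨Multiset.mem_toFinset.mpr he, hxe⟩)) (fun c => c)⟩
    · refine ⟨E.min' hne, ?_, ?_⟩
      · exact (Finset.mem_filter.mp (E.min'_mem hne)).2
      · intro e he hxe
        exact E.min'_le e (Finset.mem_filter.mpr ⟨Multiset.mem_toFinset.mpr he, hxe⟩)
  have key : ∀ M : Multiset ℝ, (∀ e ∈ M, x < e → y ≤ e) →
      M.countP (fun a => x < a) = M.countP (fun a => y ≤ a) := by
    intro M hM
    apply Multiset.countP_congr rfl
    intro a ha
    exact propext ⟨fun hxa => hM a ha hxa, fun hya => lt_of_lt_of_le hxy hya⟩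
  have hA := countP_le_split x A
  have hB := countP_le_split x B
  rw [key A (fun e he => hy e (Multiset.mem_add.mpr (Or.inl he)))] at hA
  rw [key B (fun e he => hy e (Multiset.mem_add.mpr (Or.inr he)))] at hB
  have h1 := h x
  have h2 := h y
  omega

lemma countP_range_map (d : ℕ) (f : ℕ → ℝ) (p : ℝ → Prop) [DecidablePred p] :
    ((Multiset.range d).map f).countP p
      = ((Finset.range d).filter (fun j => p (f j))).card := by
  rw [Multiset.countP_map]
  rfl

lemma sum_range_map (d : ℕ) (f : ℕ → ℝ) :
    ((Multiset.range d).map f).sum = ∑ j ∈ Finset.range d, f j := rfl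

/-! ### Jumping numbers of a filtration -/

noncomputable def lamJ (k : Type*) {N : Type*} [Field k] [AddCommGroup N] [Module k N]
    (g : ℝ → Submodule k N) (d j : ℕ) : ℝ :=
  sInf {t : ℝ | j + 1 ≤ d - finrank k (g t)}

lemma lamJ_spec {k N : Type*} [Field k] [AddCommGroup N] [Module k N]
    [FiniteDimensional k N]
    (g : ℝ → Submodule k N) (d : ℕ) (B : ℝ)
    (hmono : Antitone g) (hatt : ∀ t, ∃ u, u < t ∧ g u = g t)
    (hle : ∀ t, finrank k (g t) ≤ d)
    (hbot : ∀ t, B ≤ t → g t = ⊥)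
    (htop : ∀ t, t ≤ -B → finrank k (g t) = d) :
    (∀ j < d, -B ≤ lamJ k g d j ∧ lamJ k g d j ≤ B) ∧
    (∀ t, finrank k (g t) =
      ((Finset.range d).filter (fun j => t ≤ lamJ k g d j)).card) := by
  classical
  have hchar : ∀ j < d, (∀ t, t ≤ lamJ k g d j ↔ d - finrank k (g t) ≤ j) := by
    intro j hj
    set S : Set ℝ := {t : ℝ | j + 1 ≤ d - finrank k (g t)} with hS
    have hBmem : B ∈ S := by
      have hr : finrank k (g B) = 0 := by rw [hbot B le_rfl]; exact finrank_bot k N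
      simp only [hS, Set.mem_setOf_eq, hr]
      omega
    have hlb : ∀ t ∈ S, -B ≤ t := by
      intro t ht
      by_contra hcon
      push_neg at hcon
      have := htop t hcon.le
      simp only [hS, Set.mem_setOf_eq, this] at ht
      omega
    have hbdd : BddBelow S := ⟨-B, hlb⟩
    have hup : ∀ t ∈ S, ∀ t', t ≤ t' → t' ∈ S := by
      intro t ht t' htt'
      have h1 : finrank k (g t') ≤ finrank k (g t) :=
        Submodule.finrank_mono (hmono htt')
      simp only [hS, Set.mem_setOf_eq] at ht ⊢
      omega
    have hnotmem : lamJ k g d j ∉ S := by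
      intro hmem
      obtain ⟨u, hu, hgu⟩ := hatt (lamJ k g d j)
      have humem : u ∈ S := by
        show j + 1 ≤ d - finrank k (g u)
        rw [hgu]
        exact hmem
      have := csInf_le hbdd humem
      have : lamJ k g d j ≤ u := this
      linarith
    intro t
    constructor
    · intro hlam
      by_contra hcon
      push_neg at hcon
      have htS : t ∈ S := by simp only [hS, Set.mem_setOf_eq]; omega
      exact hnotmem (hup t htS _ hlam)
    · intro hdf
      by_contra hcon
      push_neg at hcon
      obtain ⟨u, huS, hu⟩ := exists_lt_of_csInf_lt ⟨B, hBmem⟩ hcon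
      have := hup u huS t hu.le
      simp only [hS, Set.mem_setOf_eq] at this
      omega
  constructor
  · intro j hj
    set S : Set ℝ := {t : ℝ | j + 1 ≤ d - finrank k (g t)} with hS
    have hBmem : B ∈ S := by
      have hr : finrank k (g B) = 0 := by rw [hbot B le_rfl]; exact finrank_bot k N
      simp only [hS, Set.mem_setOf_eq, hr]
      omega
    have hlb : ∀ t ∈ S, -B ≤ t := by
      intro t ht
      by_contra hcon
      push_neg at hcon
      have := htop t hcon.le
      simp only [hS, Set.mem_setOf_eq, this] at ht
      omega
    exact ⟨le_csInf ⟨B, hBmem⟩ hlb, csInf_le ⟨-B, hlb⟩ hBmem⟩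
  · intro t
    have h1 : (Finset.range d).filter (fun j => t ≤ lamJ k g d j)
        = (Finset.range d).filter (fun j => d - finrank k (g t) ≤ j) := by
      apply Finset.filter_congr
      intro j hj
      simp only [Finset.mem_range] at hj
      simp [hchar j hj t]
    rw [h1]
    have h2 : (Finset.range d).filter (fun j => d - finrank k (g t) ≤ j)
        = Finset.Ico (d - finrank k (g t)) d := by
      ext j
      simp [Finset.mem_filter, Finset.mem_range, Finset.mem_Ico, and_comm]
    rw [h2, Nat.card_Ico, Nat.sub_sub_self (hle t)]

/-! ### Rank identities along the chain -/

lemma finrank_eq_map_add_inf_ker {k H N : Type*} [Field k] [AddCommGroup H] [Module k H]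
    [FiniteDimensional k H] [AddCommGroup N] [Module k N]
    (P : Submodule k H) (φ : H →ₗ[k] N) :
    finrank k P = finrank k (P.map φ) + finrank k (P ⊓ LinearMap.ker φ : Submodule k H) := by
  let ψ := φ.comp P.subtype
  have h1 : finrank k (LinearMap.range ψ) + finrank k (LinearMap.ker ψ) = finrank k P :=
    LinearMap.finrank_range_add_finrank_ker ψ
  have h2 : LinearMap.range ψ = P.map φ := by
    rw [LinearMap.range_comp, Submodule.range_subtype]
  have h3 : finrank k (LinearMap.ker ψ) = finrank k (P ⊓ LinearMap.ker φ : Submodule k H) := by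
    have he : (LinearMap.ker ψ).map P.subtype = P ⊓ LinearMap.ker φ := by
      rw [show LinearMap.ker ψ = Submodule.comap P.subtype (LinearMap.ker φ) from
        LinearMap.ker_comp _ _, Submodule.map_comap_subtype]
    rw [← he, Submodule.finrank_map_subtype_eq]
  rw [← h2, ← h3]
  omega

lemma chain_rank {k H : Type*} [Field k] [AddCommGroup H] [Module k H]
    [FiniteDimensional k H]
    {s : ℕ} (N : Fin s → Type*) [∀ i, AddCommGroup (N i)] [∀ i, Module k (N i)]
    (r : ∀ i, H →ₗ[k] N i)
    (W : Fin (s + 1) → Submodule k H)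
    (hTop : W 0 = ⊤) (hBot : W (Fin.last s) = ⊥)
    (hker : ∀ i : Fin s, W i.succ = W i.castSucc ⊓ LinearMap.ker (r i))
    (G : Submodule k H) :
    finrank k G = ∑ i : Fin s, finrank k ((G ⊓ W i.castSucc).map (r i)) := by
  classical
  set a : Fin (s+1) → ℕ := fun i => finrank k (G ⊓ W i : Submodule k H) with ha
  set b : Fin s → ℕ := fun i => finrank k ((G ⊓ W i.castSucc).map (r i)) with hb
  have step : ∀ i : Fin s, a i.castSucc = b i + a i.succ := by
    intro i
    have h := finrank_eq_map_add_inf_ker (G ⊓ W i.castSucc) (r i)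
    rw [inf_assoc, ← hker i] at h
    exact h
  set b' : ℕ → ℕ := fun j => if h : j < s then b ⟨j, h⟩ else 0 with hb'
  have main : ∀ n : ℕ, ∀ hn : n ≤ s,
      a ⟨n, by omega⟩ + ∑ j ∈ Finset.range n, b' j = a 0 := by
    intro n
    induction n with
    | zero => intro hn; simp
    | succ n ih =>
      intro hn
      have hn' : n < s := hn
      have hstep := step ⟨n, hn'⟩
      rw [Fin.castSucc_mk, Fin.succ_mk] at hstep
      have := ih (le_of_lt hn')
      rw [Finset.sum_range_succ]
      have hbn : b' n = b ⟨n, hn'⟩ := by simp [hb', hn']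
      omega
  have hfin := main s le_rfl
  have h0 : a 0 = finrank k G := by
    rw [ha]; simp only; rw [hTop, inf_top_eq]
  have hlast : a ⟨s, by omega⟩ = 0 := by
    rw [ha]; simp only
    rw [show (⟨s, by omega⟩ : Fin (s+1)) = Fin.last s from rfl, hBot, inf_bot_eq]
    exact finrank_bot k H
  rw [hlast, zero_add] at hfin
  rw [← h0, ← hfin, Finset.sum_range fun j => b' j]
  apply Finset.sum_congr rfl
  intro i _
  simp [hb', i.isLt]


theorem stmt11 {k H : Type*} [Field k] [AddCommGroup H] [Module k H]
    [FiniteDimensional k H]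
    {s : ℕ} (N : Fin s → Type*) [∀ i, AddCommGroup (N i)] [∀ i, Module k (N i)]
    [∀ i, FiniteDimensional k (N i)]
    (r : ∀ i, H →ₗ[k] N i)
    (W : Fin (s + 1) → Submodule k H)
    (hTop : W 0 = ⊤) (hBot : W (Fin.last s) = ⊥)
    (hker : ∀ i : Fin s, W i.succ = W i.castSucc ⊓ LinearMap.ker (r i))
    (hVi : ∀ i : Fin s, (W i.castSucc).map (r i) ≠ ⊥)
    (F : ℝ → Submodule k H)
    (hmono : Antitone F)
    (hcont : ∀ t : ℝ, F t = ⨅ (u : ℝ) (_ : u < t), F u)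
    -- linear boundedness of the filtration
    (C : ℝ) (hC : 0 < C) (m : ℕ) (hm : 0 < m)
    (hlb : ∀ t : ℝ, (C * m ≤ t → F t = ⊥) ∧ (t ≤ -(C * m) → F t = ⊤)) :
    SmRel (⊤ : Submodule k H) F m
      = ∑ i : Fin s,
          ((Module.finrank k ((W i.castSucc).map (r i)) : ℝ)
              / (Module.finrank k H : ℝ))
            * SmRel ((W i.castSucc).map (r i))
                (fun t => (F t ⊓ W i.castSucc).map (r i)) m ∧
    TmRel F m
      = ⨆ i : Fin s, TmRel (fun t => (F t ⊓ W i.castSucc).map (r i)) m := by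
  classical
  -- left-attainment of the filtration
  have hatt : ∀ t : ℝ, ∃ u, u < t ∧ F u = F t := by
    intro t
    have hne : {n : ℕ | ∃ u, u < t ∧ finrank k (F u) = n}.Nonempty :=
      ⟨finrank k (F (t - 1)), ⟨t - 1, by linarith, rfl⟩⟩
    obtain ⟨u₀, hu₀, hn₀⟩ := Nat.sInf_mem hne
    refine ⟨u₀, hu₀, ?_⟩
    have hmin : ∀ v, v < t → F u₀ ≤ F v := by
      intro v hv
      have hw : max u₀ v < t := max_lt hu₀ hv
      have h1 : F (max u₀ v) ≤ F u₀ := hmono (le_max_left _ _)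
      have h2 : finrank k (F u₀) ≤ finrank k (F (max u₀ v)) := by
        rw [hn₀]
        exact Nat.sInf_le ⟨max u₀ v, hw, rfl⟩
      have heq := Submodule.eq_of_le_of_finrank_le h1 h2
      rw [← heq]
      exact hmono (le_max_right _ _)
    have h1 : F t ≤ F u₀ := by
      conv_lhs => rw [hcont t]
      exact biInf_le F hu₀
    have h2 : F u₀ ≤ F t := by
      conv_rhs => rw [hcont t]
      exact le_iInf₂ hmin
    exact le_antisymm h2 h1
  -- notation
  set g : ∀ i : Fin s, ℝ → Submodule k (N i) :=
    fun i t => (F t ⊓ W i.castSucc).map (r i) with hg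
  set d : Fin s → ℕ := fun i => finrank k ((W i.castSucc).map (r i)) with hd
  set D : ℕ := finrank k (⊤ : Submodule k H) with hD
  have hDH : D = finrank k H := finrank_top k H
  have hm' : (m : ℝ) ≠ 0 := Nat.cast_ne_zero.mpr hm.ne'
  -- basic properties of the induced filtrations
  have hgmono : ∀ i, Antitone (g i) := by
    intro i u v huv
    exact Submodule.map_mono (inf_le_inf_right _ (hmono huv))
  have hgatt : ∀ i, ∀ t, ∃ u, u < t ∧ g i u = g i t := by
    intro i t
    obtain ⟨u, hu, h⟩ := hatt t
    exact ⟨u, hu, by rw [hg]; simp only; rw [h]⟩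
  have hgle : ∀ i, ∀ t, finrank k (g i t) ≤ d i := by
    intro i t
    exact Submodule.finrank_mono (Submodule.map_mono inf_le_right)
  have hgbot : ∀ i, ∀ t, C * m ≤ t → g i t = ⊥ := by
    intro i t ht
    rw [hg]; simp only; rw [(hlb t).1 ht]
    simp
  have hgtop : ∀ i, ∀ t, t ≤ -(C * m) → finrank k (g i t) = d i := by
    intro i t ht
    rw [hg]; simp only; exact (congrArg (fun P : Submodule k H => finrank k ((P ⊓ W i.castSucc).map (r i))) ((hlb t).2 ht)).trans (by rw [top_inf_eq])
  -- the whole filtration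
  have hFle : ∀ t, finrank k (F t) ≤ D := fun t => hDH ▸ Submodule.finrank_le (F t)
  have hFbot : ∀ t : ℝ, C * m ≤ t → F t = ⊥ := fun t => (hlb t).1
  have hFtop : ∀ t : ℝ, t ≤ -(C * m) → finrank k (F t) = D := by
    intro t ht
    rw [(hlb t).2 ht]
  have hspecF := lamJ_spec F D (C * m) hmono hatt hFle hFbot hFtop
  have hspecg := fun i => lamJ_spec (g i) (d i) (C * m) (hgmono i) (hgatt i)
    (hgle i) (hgbot i) (hgtop i)
  -- dimension counting
  have hcount : ∀ t, finrank k (F t) = ∑ i, finrank k (g i t) := by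
    intro t
    exact chain_rank N r W hTop hBot hker (F t)
  -- multiset of jumping numbers
  set A : Multiset ℝ := (Multiset.range D).map (lamJ k F D) with hA
  set Bm : Multiset ℝ :=
    ∑ i : Fin s, (Multiset.range (d i)).map (lamJ k (g i) (d i)) with hBm
  have hAcount : ∀ t, A.countP (fun a => t ≤ a) = finrank k (F t) := by
    intro t
    rw [hA, countP_range_map]
    exact (hspecF.2 t).symm
  have hBcount : ∀ t, Bm.countP (fun a => t ≤ a) = ∑ i, finrank k (g i t) := by
    intro t
    rw [hBm, ← Multiset.coe_countPAddMonoidHom, map_sum]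
    apply Finset.sum_congr rfl
    intro i _
    rw [Multiset.coe_countPAddMonoidHom, countP_range_map]
    exact ((hspecg i).2 t).symm
  have hAB : A = Bm := by
    apply multiset_eq_of_countP
    intro t
    rw [hAcount, hBcount, hcount t]
  have hsums : ∑ j ∈ Finset.range D, lamJ k F D j
      = ∑ i : Fin s, ∑ j ∈ Finset.range (d i), lamJ k (g i) (d i) j := by
    have h1 : A.sum = Bm.sum := by rw [hAB]
    rw [hA, sum_range_map] at h1
    have h2 : Bm.sum = ∑ i : Fin s, ((Multiset.range (d i)).map (lamJ k (g i) (d i))).sum := by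
      rw [hBm]
      exact map_sum Multiset.sumAddMonoidHom _ Finset.univ
    rw [h1, h2]
    apply Finset.sum_congr rfl
    intro i _
    rw [sum_range_map]
  -- total dimension
  have hdim : D = ∑ i, d i := by
    have h := hcount (-(C * m))
    rw [(hlb (-(C * m))).2 le_rfl] at h
    rw [hD, h]
    apply Finset.sum_congr rfl
    intro i _
    have hFt : F (-(C * (m:ℝ))) = ⊤ := (hlb _).2 le_rfl
    rw [hg, hd]; simp only; exact (congrArg (fun P : Submodule k H => finrank k ((P ⊓ W i.castSucc).map (r i))) hFt).trans (by rw [top_inf_eq])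
  have hd0 : ∀ i, d i ≠ 0 := by
    intro i h0
    exact hVi i (Submodule.finrank_eq_zero.mp h0)
  constructor
  · -- the S_m identity
    have hSm : SmRel (⊤ : Submodule k H) F m
        = ((m : ℝ) * (D : ℝ))⁻¹ * ∑ j ∈ Finset.range D, lamJ k F D j := rfl
    have hSmi : ∀ i : Fin s, SmRel ((W i.castSucc).map (r i))
          (fun t => (F t ⊓ W i.castSucc).map (r i)) m
        = ((m : ℝ) * (d i : ℝ))⁻¹ * ∑ j ∈ Finset.range (d i), lamJ k (g i) (d i) j := fun i => rfl
    rw [hSm, hsums, Finset.mul_sum]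
    apply Finset.sum_congr rfl
    intro i _
    rw [hSmi i]
    have hdi : (d i : ℝ) ≠ 0 := Nat.cast_ne_zero.mpr (hd0 i)
    have hD0 : (D : ℝ) ≠ 0 := by
      have : d i ≤ D := hdim ▸ Finset.single_le_sum (fun j _ => Nat.zero_le _) (Finset.mem_univ i)
      have : D ≠ 0 := fun hc => hd0 i (Nat.le_zero.mp (hc ▸ this))
      exact Nat.cast_ne_zero.mpr this
    rw [hDH] at hD0 ⊢
    field_simp
    ring
  · -- the T_m identity
    rcases Nat.eq_zero_or_pos s with hs | hs
    · subst hs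
      have hHtriv : (⊤ : Submodule k H) = ⊥ := by
        rw [← hTop, ← hBot]
        rfl
      have hFt : ∀ t : ℝ, F t = ⊥ := fun t => le_bot_iff.mp (by rw [← hHtriv]; exact le_top)
      have hempty : {t : ℝ | F t ≠ ⊥} = ∅ := by ext t; simp [hFt]
      have hL : TmRel F m = 0 := by
        show (m:ℝ)⁻¹ * sSup {t : ℝ | F t ≠ ⊥} = 0
        rw [hempty, Real.sSup_empty, mul_zero]
      rw [hL]
      exact (Real.iSup_of_isEmpty _).symm
    · have hnon : Nonempty (Fin s) := ⟨⟨0, hs⟩⟩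
      set a : Fin s → ℝ := fun i => sSup {t : ℝ | g i t ≠ ⊥} with haa
      have hIic : ∀ i, {t : ℝ | g i t ≠ ⊥} = Set.Iic (a i) := by
        intro i
        have hne : (-(C * (m:ℝ))) ∈ {t : ℝ | g i t ≠ ⊥} := by
          show g i (-(C * (m:ℝ))) ≠ ⊥
          rw [hg]; simp only; rw [(hlb _).2 le_rfl, top_inf_eq]
          exact hVi i
        have hbdd : BddAbove {t : ℝ | g i t ≠ ⊥} := by
          refine ⟨C * m, fun t ht => ?_⟩
          by_contra hc; push_neg at hc
          exact ht (hgbot i t hc.le)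
        have hmem : g i (a i) ≠ ⊥ := by
          obtain ⟨u, hu, hgu⟩ := hgatt i (a i)
          obtain ⟨v, hv, huv⟩ := exists_lt_of_lt_csSup ⟨_, hne⟩ hu
          rw [← hgu]
          intro hbotu
          have hle' : g i v ≤ g i u := hgmono i huv.le
          rw [hbotu] at hle'
          exact hv (le_bot_iff.mp hle')
        ext t
        simp only [Set.mem_setOf_eq, Set.mem_Iic]
        constructor
        · intro ht; exact le_csSup hbdd ht
        · intro ht hbott
          have hle' : g i (a i) ≤ g i t := hgmono i ht
          rw [hbott] at hle'
          exact hmem (le_bot_iff.mp hle')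
      obtain ⟨i₀, -, hmax⟩ := Finset.exists_max_image Finset.univ a Finset.univ_nonempty
      have h1 : ∀ t, (F t = ⊥) ↔ ∀ i, g i t = ⊥ := by
        intro t
        rw [← Submodule.finrank_eq_zero (R := k), hcount t, Finset.sum_eq_zero_iff]
        constructor
        · intro h i
          exact Submodule.finrank_eq_zero.mp (h i (Finset.mem_univ i))
        · intro h i _
          exact Submodule.finrank_eq_zero.mpr (h i)
      have hFIic : {t : ℝ | F t ≠ ⊥} = Set.Iic (a i₀) := by
        ext t
        simp only [Set.mem_setOf_eq, Set.mem_Iic]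
        constructor
        · intro hFt
          obtain ⟨i, hi⟩ := not_forall.mp (fun hall => hFt ((h1 t).mpr hall))
          have : t ∈ Set.Iic (a i) := by rw [← hIic i]; exact hi
          exact le_trans this (hmax i (Finset.mem_univ i))
        · intro ht
          have : t ∈ {u : ℝ | g i₀ u ≠ ⊥} := by rw [hIic i₀]; exact ht
          intro hFbot'
          exact this ((h1 t).mp hFbot' i₀)
      have hL : TmRel F m = (m:ℝ)⁻¹ * a i₀ := by
        show (m:ℝ)⁻¹ * sSup {t : ℝ | F t ≠ ⊥} = _
        rw [hFIic, csSup_Iic]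
      have hTm : ∀ i, TmRel (fun t => (F t ⊓ W i.castSucc).map (r i)) m = (m:ℝ)⁻¹ * a i :=
        fun i => rfl
      rw [hL]
      refine le_antisymm ?_ ?_
      · have hle' := le_ciSup
          (f := fun i => TmRel (fun t => (F t ⊓ W i.castSucc).map (r i)) m)
          (Set.Finite.bddAbove (Set.finite_range _)) i₀
        rw [hTm i₀] at hle'
        exact hle'
      · apply ciSup_le
        intro i
        rw [hTm i]
        exact mul_le_mul_of_nonneg_left (hmax i (Finset.mem_univ i)) (by positivity)
end

section
/- Let $(X_0, \Delta_0)$ be a log Fano pair over a field of characteristic 0 and let $(X, \Delta + X_0) \to C$ be a plt extension over the spectrum of a DVR with $\mathrm{lct}(X, \Delta + X_0; D) = \mathrm{lct}(X_0, \Delta_0; D|_{X_0})$ for all relative $m$-basis type divisors $D$ (inversion of adjunction), and such that every $m$-basis type divisor of $L_0$ lifts to a relative $m$-basis type divisor of $L$. Then for every $m$ divisible by $r$, $\delta_m(X, \Delta + X_0; L) = \delta_m(X_0, \Delta_0; L_0)$, and consequently $\delta(X, \Delta + X_0; L) = \delta(X_0, \Delta_0; L_0)$. -/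
open Filter

theorem stmt16_general (𝒟 𝒟₀ : ℕ → Type*)
    (lct : ∀ m, 𝒟 m → ℝ) (lct₀ : ∀ m, 𝒟₀ m → ℝ)
    (res : ∀ m, 𝒟 m → 𝒟₀ m)
    -- inversion of adjunction for basis type divisors
    (hadj : ∀ (m : ℕ) (D : 𝒟 m), lct m D = lct₀ m (res m D))
    -- every m-basis type divisor of L₀ lifts
    (hlift : ∀ m : ℕ, Function.Surjective (res m))
    (r : ℕ) :
    (∀ m : ℕ, (⨅ D : 𝒟 m, lct m D) = ⨅ D₀ : 𝒟₀ m, lct₀ m D₀) ∧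
    Filter.limsup (fun m : ℕ => ⨅ D : 𝒟 (r * m), lct (r * m) D) atTop
      = Filter.limsup (fun m : ℕ => ⨅ D₀ : 𝒟₀ (r * m), lct₀ (r * m) D₀) atTop := by
  have hδ : ∀ m : ℕ, (⨅ D : 𝒟 m, lct m D) = ⨅ D₀ : 𝒟₀ m, lct₀ m D₀ := fun m =>
    (iInf_congr (hadj m)).trans ((hlift m).iInf_comp (lct₀ m))
  exact ⟨hδ, by simp only [hδ]⟩

theorem stmt16 (𝒟 𝒟₀ : ℕ → Type*) [∀ m, Nonempty (𝒟 m)] [∀ m, Nonempty (𝒟₀ m)]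
    (lct : ∀ m, 𝒟 m → ℝ) (lct₀ : ∀ m, 𝒟₀ m → ℝ)
    (res : ∀ m, 𝒟 m → 𝒟₀ m)
    -- inversion of adjunction for basis type divisors
    (hadj : ∀ (m : ℕ) (D : 𝒟 m), lct m D = lct₀ m (res m D))
    -- every m-basis type divisor of L₀ lifts
    (hlift : ∀ m : ℕ, Function.Surjective (res m))
    (r : ℕ) (hr : 0 < r) :
    (∀ m : ℕ, (⨅ D : 𝒟 m, lct m D) = ⨅ D₀ : 𝒟₀ m, lct₀ m D₀) ∧
    Filter.limsup (fun m : ℕ => ⨅ D : 𝒟 (r * m), lct (r * m) D) atTop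
      = Filter.limsup (fun m : ℕ => ⨅ D₀ : 𝒟₀ (r * m), lct₀ (r * m) D₀) atTop :=
  stmt16_general 𝒟 𝒟₀ lct lct₀ res hadj hlift r
end
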